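/- arXiv:2002.07738 — 4 statements merged into one kernel-verified Lean document; each statement's English description precedes it below -/
import Mathlib

section
/- Let h : ℝ^d → ℝ be linear with coefficients β₁,…,β_d. Among all weighted L^p metrics (p ≥ 1, nonnegative weights), the weighted L¹ metric with weights wᵢ = |βᵢ| is the unique minimal metric with respect to h: h is individually fair under it, and any weighted L^p metric D' under which h is individually fair and which is pointwise dominated by it must equal it. -/
open Finset Real in
/-- The weighted `L^p` metric on `ℝ^d` with exponent `p` and weights `w`. -/
noncomputable def weightedLp {d : ℕ} (p : ℝ) (w : Fin d → ℝ) (x1 x2 : Fin d → ℝ) : ℝ :=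
  (∑ i, w i * |x1 i - x2 i| ^ p) ^ (1 / p)

/-- Individual fairness of a real-valued model under a metric `D`. -/
def IndivFairReal {d : ℕ} (h : (Fin d → ℝ) → ℝ) (D : (Fin d → ℝ) → (Fin d → ℝ) → ℝ) : Prop :=
  ∀ x1 x2, |h x1 - h x2| ≤ D x1 x2

open Finset in
/-- If at most one value of `f` is nonzero, the `ℓ^p` sum collapses. -/
lemma helper_sum {d : ℕ} (f : Fin d → ℝ) (hf : ∀ i, 0 ≤ f i)
    (huniq : ∀ i j, f i ≠ 0 → f j ≠ 0 → i = j) {p : ℝ} (hp : 0 < p) :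
    (∑ i, f i ^ p) ^ (1 / p) = ∑ i, f i := by
  by_cases hall : ∀ i, f i = 0
  · have : (1:ℝ)/p ≠ 0 := by positivity
    simp [hall, Real.zero_rpow hp.ne', Real.zero_rpow, this, Real.zero_rpow (inv_ne_zero hp.ne')]
  · push_neg at hall
    obtain ⟨j, hj⟩ := hall
    have h1 : ∑ i, f i ^ p = f j ^ p := by
      refine Finset.sum_eq_single j (fun i _ hij => ?_) (fun hmem => absurd (mem_univ j) hmem)
      have : f i = 0 := by
        by_contra hfi
        exact hij (huniq i j hfi hj)
      rw [this, Real.zero_rpow hp.ne']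
    have h2 : ∑ i, f i = f j := by
      refine Finset.sum_eq_single j (fun i _ hij => ?_) (fun hmem => absurd (mem_univ j) hmem)
      by_contra hfi
      exact hij (huniq i j hfi hj)
    rw [h1, h2, ← Real.rpow_mul (hf j), mul_one_div_cancel hp.ne', Real.rpow_one]

open Finset in
theorem stmt_3 {d : ℕ} (β : Fin d → ℝ) (b : ℝ) (h : (Fin d → ℝ) → ℝ)
    (hh : ∀ x, h x = ∑ i, β i * x i + b) :
    IndivFairReal h (weightedLp 1 (fun i => |β i|)) ∧
    ∀ (p : ℝ) (w' : Fin d → ℝ), 1 ≤ p → (∀ i, 0 ≤ w' i) →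
      IndivFairReal h (weightedLp p w') →
      (∀ x1 x2, weightedLp p w' x1 x2 ≤ weightedLp 1 (fun i => |β i|) x1 x2) →
      ∀ x1 x2, weightedLp p w' x1 x2 = weightedLp 1 (fun i => |β i|) x1 x2 := by
  have hsub : ∀ x1 x2, h x1 - h x2 = ∑ i, β i * (x1 i - x2 i) := by
    intro x1 x2
    rw [hh, hh]
    simp only [mul_sub, Finset.sum_sub_distrib]
    ring
  have hD1 : ∀ x1 x2 : Fin d → ℝ,
      weightedLp 1 (fun i => |β i|) x1 x2 = ∑ i, |β i| * |x1 i - x2 i| := by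
    intro x1 x2
    unfold weightedLp
    norm_num
  have fair1 : IndivFairReal h (weightedLp 1 (fun i => |β i|)) := by
    intro x1 x2
    rw [hD1, hsub]
    refine (Finset.abs_sum_le_sum_abs _ _).trans (le_of_eq ?_)
    simp [abs_mul]
  refine ⟨fair1, ?_⟩
  intro p w' hp hw hfair hdom
  have hp0 : (0:ℝ) < p := lt_of_lt_of_le one_pos hp
  -- Step 1: weights are determined
  have hweights : ∀ i, w' i = |β i| ^ p := by
    intro i
    set a : Fin d → ℝ := fun j => if j = i then 1 else 0 with ha
    set z : Fin d → ℝ := fun _ => 0 with hz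
    have hDab : weightedLp p w' a z = (w' i) ^ (1 / p) := by
      unfold weightedLp
      congr 1
      refine Finset.sum_eq_single i (fun j _ hij => ?_) (fun hmem => absurd (mem_univ i) hmem)
        |>.trans ?_
      · simp [ha, hz, hij, Real.zero_rpow hp0.ne']
      · simp [ha, hz, Real.one_rpow]
    have hD1ab : weightedLp 1 (fun j => |β j|) a z = |β i| := by
      rw [hD1]
      refine Finset.sum_eq_single i (fun j _ hij => ?_) (fun hmem => absurd (mem_univ i) hmem)
        |>.trans ?_
      · simp [ha, hz, hij]
      · simp [ha, hz]
    have hhab : h a - h z = β i := by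
      rw [hsub]
      refine Finset.sum_eq_single i (fun j _ hij => ?_) (fun hmem => absurd (mem_univ i) hmem)
        |>.trans ?_
      · simp [ha, hz, hij]
      · simp [ha, hz]
    have hle1 : (w' i) ^ (1 / p) ≤ |β i| := by
      have := hdom a z
      rwa [hDab, hD1ab] at this
    have hle2 : |β i| ≤ (w' i) ^ (1 / p) := by
      have := hfair a z
      rwa [hDab, hhab] at this
    have heq : (w' i) ^ (1 / p) = |β i| := le_antisymm hle1 hle2
    have : ((w' i) ^ (1 / p)) ^ p = |β i| ^ p := by rw [heq]
    rwa [← Real.rpow_mul (hw i), one_div_mul_cancel hp0.ne', Real.rpow_one] at this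
  intro x1 x2
  rcases eq_or_lt_of_le hp with hp1 | hp1
  · -- p = 1
    unfold weightedLp
    congr 1
    · refine Finset.sum_congr rfl (fun i _ => ?_)
      rw [hweights i, ← hp1, Real.rpow_one]
    · rw [← hp1]
  · -- p > 1 : at most one β i is nonzero
    have hkey : ∀ i j, β i ≠ 0 → β j ≠ 0 → i = j := by
      by_contra hcon
      push_neg at hcon
      obtain ⟨i0, j0, hi0, hj0, hij0⟩ := hcon
      -- the filter of nonzero coordinates has at least two elements
      set S : Finset (Fin d) := Finset.univ.filter (fun i => β i ≠ 0) with hS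
      have hcard : 2 ≤ S.card := by
        have : ({i0, j0} : Finset (Fin d)) ⊆ S := by
          intro x hx
          simp only [Finset.mem_insert, Finset.mem_singleton] at hx
          rcases hx with rfl | rfl <;> simp [hS, hi0, hj0]
        calc 2 = ({i0, j0} : Finset (Fin d)).card := by rw [Finset.card_insert_of_notMem
                (by simp [hij0]), Finset.card_singleton]
          _ ≤ S.card := Finset.card_le_card this
      set a : Fin d → ℝ := fun i => if β i = 0 then 0 else (β i)⁻¹ with ha
      set z : Fin d → ℝ := fun _ => 0 with hz
      have hhaz : h a - h z = (S.card : ℝ) := by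
        rw [hsub]
        have : ∀ i : Fin d, β i * (a i - z i) = if β i ≠ 0 then 1 else 0 := by
          intro i
          by_cases hb : β i = 0 <;> simp [ha, hz, hb, mul_inv_cancel₀]
        rw [Finset.sum_congr rfl (fun i _ => this i), Finset.sum_boole, hS]
      have hDaz : weightedLp p w' a z = (S.card : ℝ) ^ (1 / p) := by
        unfold weightedLp
        congr 1
        have : ∀ i : Fin d, w' i * |a i - z i| ^ p = if β i ≠ 0 then 1 else 0 := by
          intro i
          by_cases hb : β i = 0
          · simp [ha, hz, hb, hweights i, Real.zero_rpow hp0.ne']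
          · have hbpos : 0 < |β i| := abs_pos.mpr hb
            have : |a i - z i| = |β i|⁻¹ := by simp [ha, hz, hb, abs_inv]
            rw [hweights i, this, if_pos hb,
              ← Real.mul_rpow hbpos.le (inv_nonneg.mpr hbpos.le),
              mul_inv_cancel₀ hbpos.ne', Real.one_rpow]
        rw [Finset.sum_congr rfl (fun i _ => this i), Finset.sum_boole, hS]
      have hfaz := hfair a z
      rw [hhaz, hDaz] at hfaz
      have hcR : (1:ℝ) < (S.card : ℝ) := by exact_mod_cast lt_of_lt_of_le one_lt_two hcard
      have habs : |(S.card : ℝ)| = (S.card : ℝ) := abs_of_nonneg (by positivity)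
      rw [habs] at hfaz
      have : (S.card : ℝ) ^ (1 / p) < (S.card : ℝ) := by
        calc (S.card : ℝ) ^ (1 / p) < (S.card : ℝ) ^ (1:ℝ) :=
              Real.rpow_lt_rpow_of_exponent_lt hcR (by
                rw [div_lt_one hp0]; exact hp1)
          _ = (S.card : ℝ) := Real.rpow_one _
      linarith
    -- conclude equality pointwise
    set f : Fin d → ℝ := fun i => |β i| * |x1 i - x2 i| with hf
    have hfnn : ∀ i, 0 ≤ f i := fun i => mul_nonneg (abs_nonneg _) (abs_nonneg _)
    have hfuniq : ∀ i j, f i ≠ 0 → f j ≠ 0 → i = j := by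
      intro i j hi hj
      refine hkey i j (fun hb => hi ?_) (fun hb => hj ?_) <;> simp [hf, hb]
    have hLHS : weightedLp p w' x1 x2 = (∑ i, f i ^ p) ^ (1 / p) := by
      unfold weightedLp
      congr 1
      refine Finset.sum_congr rfl (fun i _ => ?_)
      rw [hweights i, hf, Real.mul_rpow (abs_nonneg _) (abs_nonneg _)]
    rw [hLHS, helper_sum f hfnn hfuniq hp0, hD1]
end

section
/- Suppose two probability distributions P, Q over a finite set Y satisfy P[y] ≤ c·Q[y] and Q[y] ≤ c·P[y] for all y, where c ≥ 1. Then the total variation distance between P and Q is at most (c-1)/(c+1). -/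
open Finset in
theorem stmt_6 {Y : Type*} [Fintype Y] (P Q : Y → ℝ) (c : ℝ) (hc : 1 ≤ c)
    (hPnonneg : ∀ y, 0 ≤ P y) (hQnonneg : ∀ y, 0 ≤ Q y)
    (hPsum : ∑ y, P y = 1) (hQsum : ∑ y, Q y = 1)
    (hPQ : ∀ y, P y ≤ c * Q y) (hQP : ∀ y, Q y ≤ c * P y) :
    (1 / 2) * ∑ y, |P y - Q y| ≤ (c - 1) / (c + 1) := by
  classical
  set S := Finset.univ.filter (fun y => Q y ≤ P y) with hS
  set a := ∑ y ∈ S, P y with ha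
  set b := ∑ y ∈ S, Q y with hb
  have hPc : ∑ y ∈ Sᶜ, P y = 1 - a := by
    have := Finset.sum_add_sum_compl S P
    rw [hPsum] at this; linarith
  have hQc : ∑ y ∈ Sᶜ, Q y = 1 - b := by
    have := Finset.sum_add_sum_compl S Q
    rw [hQsum] at this; linarith
  have hsplit : ∑ y, |P y - Q y| = (a - b) + ((1 - b) - (1 - a)) := by
    rw [← Finset.sum_add_sum_compl S (fun y => |P y - Q y|)]
    have h1 : ∑ y ∈ S, |P y - Q y| = a - b := by
      rw [ha, hb, ← Finset.sum_sub_distrib]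
      apply Finset.sum_congr rfl
      intro y hy
      rw [hS, Finset.mem_filter] at hy
      exact abs_of_nonneg (by linarith [hy.2])
    have h2 : ∑ y ∈ Sᶜ, |P y - Q y| = (1 - b) - (1 - a) := by
      rw [← hPc, ← hQc, ← Finset.sum_sub_distrib]
      apply Finset.sum_congr rfl
      intro y hy
      rw [Finset.mem_compl, hS, Finset.mem_filter] at hy
      have : ¬ Q y ≤ P y := fun h => hy ⟨Finset.mem_univ y, h⟩
      rw [abs_of_nonpos (by linarith)]; ring
    rw [h1, h2]
  have h1 : a ≤ c * b := by
    rw [ha, hb, Finset.mul_sum]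
    exact Finset.sum_le_sum fun y _ => hPQ y
  have h2 : 1 - b ≤ c * (1 - a) := by
    rw [← hQc, ← hPc, Finset.mul_sum]
    exact Finset.sum_le_sum fun y _ => hQP y
  have hba : b ≤ a := by
    rw [ha, hb]
    apply Finset.sum_le_sum
    intro y hy
    rw [hS, Finset.mem_filter] at hy
    exact hy.2
  have hbnn : 0 ≤ b := Finset.sum_nonneg fun y _ => hQnonneg y
  have hann : a ≤ 1 := by
    have : 0 ≤ ∑ y ∈ Sᶜ, P y := Finset.sum_nonneg fun y _ => hPnonneg y
    linarith [hPc]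
  rw [hsplit, le_div_iff₀ (by linarith : (0:ℝ) < c + 1)]
  nlinarith
end

section
/- Let D be a weighted L^p metric on ℝ^d, g(t) = exp(-2D(0,t))/Z the Laplace smoothing density, f : ℝ^d → Y any function with Y finite, and define the smoothed model ĝf(x)[y] = ∫ 1[f(x+t)=y]·g(t) dt. Then the smoothed model is individually fair under D: for all x, ε, TV(ĝf(x), ĝf(x+ε)) ≤ D(x, x+ε). -/
/-!
Write `N` for the weighted `ℓᵖ` norm, so that `D x y = N (x - y)` and `g t ∝ exp (-2 N t)`.
Minkowski's inequality makes `N` subadditive, hence shifting the Laplace density by `ε` changes it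
pointwise by a factor of at most `exp (2 N ε)` in either direction. The label distributions of
`f (x + ·)` under the two densities inherit this ratio bound on every set of labels, and two
probability vectors that are `k`-close in this sense are within total variation `(k - 1) / (k + 1)`.
For `k = exp (2 N ε)` this is `tanh (N ε) ≤ N ε`.
-/

open Finset MeasureTheory

theorem Real.tanh_eq_exp_two_mul (x : ℝ) :
    Real.tanh x = (Real.exp (2 * x) - 1) / (Real.exp (2 * x) + 1) := by
  have h : Real.exp (2 * x) = Real.exp x * Real.exp x := by rw [← Real.exp_add, two_mul]
  rw [Real.tanh_eq, h, Real.exp_neg]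
  have := Real.exp_pos x
  field_simp

theorem Real.sinh_le_mul_cosh {x : ℝ} (hx : 0 ≤ x) : Real.sinh x ≤ x * Real.cosh x := by
  have hderiv : ∀ s, HasDerivAt (fun s => s * Real.cosh s - Real.sinh s) (s * Real.sinh s) s := by
    intro s
    exact (((hasDerivAt_id' s).mul (Real.hasDerivAt_cosh s)).sub
      (Real.hasDerivAt_sinh s)).congr_deriv (by ring)
  have hmono : Monotone fun s => s * Real.cosh s - Real.sinh s :=
    monotone_of_hasDerivAt_nonneg hderiv fun s => by
      rcases le_total 0 s with hs | hs
      · exact mul_nonneg hs (Real.sinh_nonneg_iff.2 hs)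
      · exact mul_nonneg_of_nonpos_of_nonpos hs (Real.sinh_nonpos_iff.2 hs)
  simpa using hmono hx

theorem Real.tanh_le_self {x : ℝ} (hx : 0 ≤ x) : Real.tanh x ≤ x := by
  rw [Real.tanh_eq_sinh_div_cosh, div_le_iff₀ (Real.cosh_pos x)]
  exact Real.sinh_le_mul_cosh hx

theorem half_sum_abs_sub_le_of_forall_sum_le_mul {Y : Type*} [Fintype Y] {P Q : Y → ℝ}
    (hP : ∑ y, P y = 1) (hQ : ∑ y, Q y = 1) {k : ℝ}
    (hPQ : ∀ S : Finset Y, ∑ y ∈ S, P y ≤ k * ∑ y ∈ S, Q y)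
    (hQP : ∀ S : Finset Y, ∑ y ∈ S, Q y ≤ k * ∑ y ∈ S, P y) :
    (1 / 2) * ∑ y, |P y - Q y| ≤ (k - 1) / (k + 1) := by
  classical
  have hk : 1 ≤ k := by simpa [hP, hQ] using hPQ univ
  set S := univ.filter fun y => Q y ≤ P y
  have habs : ∑ y, |P y - Q y| = 2 * ∑ y ∈ S, (P y - Q y) := by
    have h : ∀ y, |P y - Q y| = 2 * (if Q y ≤ P y then P y - Q y else 0) - (P y - Q y) := by
      intro y
      split_ifs with hy
      · rw [abs_of_nonneg (sub_nonneg.2 hy)]; ring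
      · rw [abs_of_neg (by linarith)]; ring
    rw [sum_congr rfl fun y _ => h y, sum_sub_distrib, ← mul_sum, ← sum_filter]
    simp only [sum_sub_distrib, hP, hQ]
    ring
  have hPc := (sum_compl_add_sum S P).trans hP
  have hQc := (sum_compl_add_sum S Q).trans hQ
  have hS := hPQ S
  have hSc := hQP Sᶜ
  rw [habs, sum_sub_distrib, le_div_iff₀ (by linarith)]
  linear_combination hS + hSc + k * hPc - hQc

section LabelDistribution

variable {E Y : Type*} [MeasurableSpace E] {μ : Measure E} [MeasurableSpace Y]
  [MeasurableSingletonClass Y] [DecidableEq Y] {φ : E → Y}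

theorem sum_integral_ite_mul_eq_setIntegral (hφ : Measurable φ) {g : E → ℝ}
    (hg : Integrable g μ) (S : Finset Y) :
    ∑ y ∈ S, ∫ t, (if φ t = y then (1 : ℝ) else 0) * g t ∂μ = ∫ t in φ ⁻¹' S, g t ∂μ := by
  have hind : ∀ T : Finset Y, ∀ t,
      ∑ y ∈ T, (if φ t = y then (1 : ℝ) else 0) * g t = (φ ⁻¹' T).indicator g t := by
    intro T t
    rw [← sum_mul, sum_ite_eq]
    by_cases h : φ t ∈ T <;> simp [h]
  have hint : ∀ y, Integrable (fun t => (if φ t = y then (1 : ℝ) else 0) * g t) μ := by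
    intro y
    refine (hg.indicator (hφ ({y} : Finset Y).measurableSet)).congr (ae_of_all _ fun t => ?_)
    rw [← hind, sum_singleton]
  rw [← integral_finsetSum S fun y _ => hint y]
  simp_rw [hind]
  exact integral_indicator (hφ S.measurableSet)

theorem sum_integral_ite_mul [Fintype Y] (hφ : Measurable φ) {g : E → ℝ} (hg : Integrable g μ) :
    ∑ y, ∫ t, (if φ t = y then (1 : ℝ) else 0) * g t ∂μ = ∫ t, g t ∂μ := by
  rw [sum_integral_ite_mul_eq_setIntegral hφ hg, coe_univ, Set.preimage_univ, setIntegral_univ]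

theorem sum_integral_ite_mul_le (hφ : Measurable φ) {g₁ g₂ : E → ℝ}
    (hg₁ : Integrable g₁ μ) (hg₂ : Integrable g₂ μ) {k : ℝ} (h : ∀ t, g₁ t ≤ k * g₂ t)
    (S : Finset Y) :
    ∑ y ∈ S, ∫ t, (if φ t = y then (1 : ℝ) else 0) * g₁ t ∂μ ≤
      k * ∑ y ∈ S, ∫ t, (if φ t = y then (1 : ℝ) else 0) * g₂ t ∂μ := by
  rw [sum_integral_ite_mul_eq_setIntegral hφ hg₁, sum_integral_ite_mul_eq_setIntegral hφ hg₂,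
    ← integral_const_mul]
  exact setIntegral_mono hg₁.integrableOn (hg₂.const_mul k).integrableOn h

theorem half_sum_abs_sub_integral_ite_mul_le [Fintype Y] (hφ : Measurable φ) {g₁ g₂ : E → ℝ}
    (hg₁ : Integrable g₁ μ) (hg₂ : Integrable g₂ μ)
    (hg₁_one : ∫ t, g₁ t ∂μ = 1) (hg₂_one : ∫ t, g₂ t ∂μ = 1) {k : ℝ}
    (h₁₂ : ∀ t, g₁ t ≤ k * g₂ t) (h₂₁ : ∀ t, g₂ t ≤ k * g₁ t) :
    (1 / 2) * ∑ y, |∫ t, (if φ t = y then (1 : ℝ) else 0) * g₁ t ∂μ -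
      ∫ t, (if φ t = y then (1 : ℝ) else 0) * g₂ t ∂μ| ≤ (k - 1) / (k + 1) :=
  half_sum_abs_sub_le_of_forall_sum_le_mul
    ((sum_integral_ite_mul hφ hg₁).trans hg₁_one) ((sum_integral_ite_mul hφ hg₂).trans hg₂_one)
    (sum_integral_ite_mul_le hφ hg₁ hg₂ h₁₂) (sum_integral_ite_mul_le hφ hg₂ hg₁ h₂₁)

end LabelDistribution

section WeightedLpNorm

variable {ι : Type*} [Fintype ι] {p : ℝ} {w : ι → ℝ}

noncomputable def weightedLpNorm (p : ℝ) (w v : ι → ℝ) : ℝ :=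
  (∑ i, w i * |v i| ^ p) ^ (1 / p)

theorem weightedLpNorm_neg (v : ι → ℝ) : weightedLpNorm p w (-v) = weightedLpNorm p w v := by
  simp [weightedLpNorm]

theorem weightedLpNorm_nonneg (hw : ∀ i, 0 ≤ w i) (v : ι → ℝ) : 0 ≤ weightedLpNorm p w v :=
  Real.rpow_nonneg (sum_nonneg fun i _ => mul_nonneg (hw i) (Real.rpow_nonneg (abs_nonneg _) _)) _

theorem weightedLpNorm_eq_unweighted (hp : 0 < p) (hw : ∀ i, 0 ≤ w i) (v : ι → ℝ) :
    weightedLpNorm p w v = (∑ i, |w i ^ (1 / p) * v i| ^ p) ^ (1 / p) := by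
  refine congrArg (· ^ (1 / p)) (sum_congr rfl fun i _ => ?_)
  rw [abs_mul, Real.mul_rpow (abs_nonneg _) (abs_nonneg _),
    abs_of_nonneg (Real.rpow_nonneg (hw i) _), ← Real.rpow_mul (hw i),
    one_div_mul_cancel hp.ne', Real.rpow_one]

theorem weightedLpNorm_add_le (hp : 1 ≤ p) (hw : ∀ i, 0 ≤ w i) (u v : ι → ℝ) :
    weightedLpNorm p w (u + v) ≤ weightedLpNorm p w u + weightedLpNorm p w v := by
  simp only [weightedLpNorm_eq_unweighted (by linarith) hw, Pi.add_apply, mul_add]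
  exact Real.Lp_add_le _ _ _ hp

theorem exp_neg_two_mul_weightedLpNorm_le (hp : 1 ≤ p) (hw : ∀ i, 0 ≤ w i) (t s : ι → ℝ) :
    Real.exp (-2 * weightedLpNorm p w t) ≤
      Real.exp (2 * weightedLpNorm p w (t - s)) * Real.exp (-2 * weightedLpNorm p w s) := by
  rw [← Real.exp_add]
  gcongr
  have := weightedLpNorm_add_le hp hw (s - t) t
  rw [sub_add_cancel, ← neg_sub, weightedLpNorm_neg] at this
  linarith

end WeightedLpNorm

open Classical in

open Finset MeasureTheory in
theorem stmt_7 {d : ℕ} {Y : Type*} [Fintype Y] [MeasurableSpace Y] [MeasurableSingletonClass Y]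
    (p : ℝ) (hp : 1 ≤ p) (w : Fin d → ℝ) (hw : ∀ i, 0 ≤ w i)
    (D : (Fin d → ℝ) → (Fin d → ℝ) → ℝ)
    (hD : ∀ x1 x2, D x1 x2 = (∑ i, w i * |x1 i - x2 i| ^ p) ^ (1 / p))
    (Z : ℝ) (hZ : Z = ∫ t : Fin d → ℝ, Real.exp (-2 * D 0 t)) (hZpos : 0 < Z)
    (g : (Fin d → ℝ) → ℝ) (hg : ∀ t, g t = Real.exp (-2 * D 0 t) / Z)
    (f : (Fin d → ℝ) → Y) (hf : Measurable f)
    (sm : (Fin d → ℝ) → Y → ℝ)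
    (hsm : ∀ x y, sm x y = ∫ t : Fin d → ℝ, (if f (x + t) = y then (1 : ℝ) else 0) * g t) :
    ∀ x ε : Fin d → ℝ,
      (1 / 2) * ∑ y, |sm x y - sm (x + ε) y| ≤ D x (x + ε) := by
  intro x ε
  have hDN : ∀ a b, D a b = weightedLpNorm p w (a - b) := hD
  have hD0 : ∀ t, D 0 t = weightedLpNorm p w t := fun t => by
    rw [hDN, zero_sub, weightedLpNorm_neg]
  have hg_int : Integrable g := by
    rw [funext hg]
    exact (Integrable.of_integral_ne_zero (hZ ▸ hZpos.ne')).div_const Z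
  have hg_one : ∫ t, g t = 1 := by
    simp_rw [hg]
    rw [integral_div, ← hZ, div_self hZpos.ne']
  have hg_le : ∀ t s, g t ≤ Real.exp (2 * weightedLpNorm p w (t - s)) * g s := fun t s => by
    rw [hg, hg, hD0, hD0, ← mul_div_assoc]
    gcongr
    exact exp_neg_two_mul_weightedLpNorm_le hp hw t s
  have hshift : ∀ y, sm (x + ε) y = ∫ t, (if f (x + t) = y then (1 : ℝ) else 0) * g (t - ε) := by
    intro y
    rw [hsm, ← integral_add_right_eq_self
      (fun t => (if f (x + t) = y then (1 : ℝ) else 0) * g (t - ε)) ε]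
    congr 1 with t
    rw [add_sub_cancel_right, add_right_comm, add_assoc]
  rw [hDN, sub_add_cancel_left, weightedLpNorm_neg]
  simp only [hsm x, hshift]
  refine (half_sum_abs_sub_integral_ite_mul_le (hf.comp (measurable_const_add x)) hg_int
    (hg_int.comp_sub_right ε) hg_one (by rw [integral_sub_right_eq_self, hg_one])
    (fun t => by simpa using hg_le t (t - ε))
    (fun t => by simpa [weightedLpNorm_neg] using hg_le (t - ε) t)).trans ?_
  rw [← Real.tanh_eq_exp_two_mul]
  exact Real.tanh_le_self (weightedLpNorm_nonneg hw ε)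
end

section
/- Let ĥ be an n-sample Monte Carlo estimate of a smoothed model h̄ : X → Δ(Y) with |Y| = m, i.e., ĥ(x)[y] = (1/n)Σⱼ 1[f(x+tⱼ)=y] with tⱼ i.i.d. from g. If h̄ is individually fair under a metric D, then for all x₁, x₂ and all ε > 0: with probability at least 1 - 2m·exp(-4nε²/m²), TV(ĥ(x₁), ĥ(x₂)) ≤ D(x₁,x₂) + ε. -/
/-!
For a fixed class `y`, the estimated difference `ĥ(x₁)[y] - ĥ(x₂)[y]` is a sum of `2n`
independent terms, each confined to an interval of length `1/n`, with mean
`h̄(x₁)[y] - h̄(x₂)[y]`. By Hoeffding's inequality it deviates from its mean by at least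
`s = 2ε/m` with probability at most `2 exp(-n s²) = 2 exp(-4nε²/m²)`. Outside the union of
these `m` events every class deviates by less than `s`, so the total variation distance of the
estimates exceeds that of `h̄` by at most `m s / 2 = ε`, and individual fairness of `h̄`
finishes the proof.
-/

open Finset MeasureTheory ProbabilityTheory Real

section

variable {Ω : Type*} [MeasurableSpace Ω] {μ : Measure Ω}

lemma measureReal_abs_sum_sub_integral_ge_le {ι : Type*} [Fintype ι] {X : ι → Ω → ℝ}
    (hindep : iIndepFun X μ) (hmeas : ∀ i, AEMeasurable (X i) μ) {a : ι → ℝ} {w : ℝ}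
    (hX : ∀ i, ∀ᵐ ω ∂μ, X i ω ∈ Set.Icc (a i) (a i + w)) {s : ℝ} (hs : 0 ≤ s) :
    μ.real {ω | s ≤ |∑ i, (X i ω - μ[X i])|}
      ≤ 2 * exp (-2 * s ^ 2 / (Fintype.card ι * w ^ 2)) := by
  have := hindep.isProbabilityMeasure
  have hcentered : iIndepFun (fun i ω => X i ω - μ[X i]) μ :=
    hindep.comp (fun i (x : ℝ) => x - ∫ ω, X i ω ∂μ) fun _ => measurable_id.sub_const _
  have hsub : HasSubgaussianMGF (fun ω => ∑ i, (X i ω - μ[X i]))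
      (∑ _i : ι, (‖w‖₊ / 2) ^ 2) μ :=
    HasSubgaussianMGF.sum_of_iIndepFun hcentered fun i _ => by
      simpa using hasSubgaussianMGF_of_mem_Icc (hmeas i) (hX i)
  have hexp : -s ^ 2 / (2 * ((∑ _i : ι, (‖w‖₊ / 2) ^ 2 : NNReal) : ℝ))
      = -2 * s ^ 2 / (Fintype.card ι * w ^ 2) := by
    rw [sum_const, card_univ, nsmul_eq_mul]
    push_cast
    rw [norm_eq_abs, div_pow, sq_abs]
    ring
  calc μ.real {ω | s ≤ |∑ i, (X i ω - μ[X i])|}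
      ≤ μ.real {ω | s ≤ ∑ i, (X i ω - μ[X i])}
        + μ.real {ω | s ≤ -∑ i, (X i ω - μ[X i])} := by
        refine (measureReal_mono fun ω (hω : s ≤ |_|) => ?_).trans (measureReal_union_le _ _)
        exact le_abs.1 hω
    _ ≤ 2 * exp (-2 * s ^ 2 / (Fintype.card ι * w ^ 2)) := by
        rw [two_mul, ← hexp]
        exact add_le_add (hsub.measure_ge_le hs) (hsub.neg.measure_ge_le hs)

lemma ofReal_one_sub_card_mul_le_measure [IsProbabilityMeasure μ] {ι : Type*} [Fintype ι]
    {G : Set Ω} {B : ι → Set Ω} (hG : ∀ ω, (∀ i, ω ∉ B i) → ω ∈ G) {δ : ℝ}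
    (hB : ∀ i, μ.real (B i) ≤ δ) :
    ENNReal.ofReal (1 - Fintype.card ι * δ) ≤ μ G := by
  have hGc : μ.real Gᶜ ≤ Fintype.card ι * δ :=
    calc μ.real Gᶜ ≤ μ.real (⋃ i, B i) := measureReal_mono fun ω hω => by
          by_contra h
          exact hω (hG ω fun i hi => h (Set.mem_iUnion.2 ⟨i, hi⟩))
      _ ≤ ∑ i, μ.real (B i) := measureReal_iUnion_fintype_le B
      _ ≤ Fintype.card ι * δ := (sum_le_sum fun i _ => hB i).trans_eq (by simp)
  have hone : 1 ≤ μ.real G + μ.real Gᶜ := by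
    simpa [measureReal_def, ENNReal.toReal_add] using
      ENNReal.toReal_mono (by finiteness) (measure_univ_le_add_compl (μ := μ) G)
  rw [← ofReal_measureReal]
  exact ENNReal.ofReal_le_ofReal (by linarith)

lemma integral_ite_mem_eq_measureReal {α : Type*} [MeasurableSpace α] {ν : Measure α}
    {T : Ω → α} (hT : Measurable T) (hlaw : μ.map T = ν) {A : Set α} (hA : MeasurableSet A)
    [DecidablePred (· ∈ A)] :
    ∫ ω, (if T ω ∈ A then (1 : ℝ) else 0) ∂μ = ν.real A := by
  rw [← hlaw, map_measureReal_apply hT hA, ← integral_indicator_one (hT hA)]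
  congr 1 with ω
  by_cases h : T ω ∈ A <;> simp [h]

lemma half_sum_abs_le_of_abs_sub_le {Y : Type*} [Fintype Y] {u v : Y → ℝ} {s : ℝ}
    (h : ∀ y, |u y - v y| ≤ s) :
    (1 / 2) * ∑ y, |u y| ≤ (1 / 2) * ∑ y, |v y| + Fintype.card Y * s / 2 := by
  have : ∑ y, |u y| ≤ ∑ y, |v y| + Fintype.card Y * s := by
    refine (sum_le_sum fun y _ => sub_le_iff_le_add'.1
      ((abs_sub_abs_le_abs_sub (u y) (v y)).trans (h y))).trans_eq ?_
    simp [sum_add_distrib]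
  linarith

noncomputable def empiricalFreq {α : Type*} {n : ℕ} (S : Fin n → α) (A : Set α)
    [DecidablePred (· ∈ A)] : ℝ :=
  (1 / n) * ∑ j, if S j ∈ A then 1 else 0

/-- The `2n` samples enter as separate summands of range `1/n`, rather than as `n` differences
of range `2/n`; this halves the variance proxy and gives the exponent `n s²`. -/
lemma measureReal_abs_empiricalFreq_sub_sub_ge_le {α : Type*} [MeasurableSpace α] {n : ℕ}
    (hn : 0 < n) {T : Fin n ⊕ Fin n → Ω → α} (hTmeas : ∀ i, Measurable (T i))
    (hTindep : iIndepFun T μ) {ν : Measure α} (hTlaw : ∀ i, μ.map (T i) = ν)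
    {A B : Set α} (hA : MeasurableSet A) (hB : MeasurableSet B)
    [DecidablePred (· ∈ A)] [DecidablePred (· ∈ B)] {s : ℝ} (hs : 0 ≤ s) :
    μ.real {ω | s ≤ |empiricalFreq (fun j => T (.inl j) ω) A
        - empiricalFreq (fun j => T (.inr j) ω) B - (ν.real A - ν.real B)|}
      ≤ 2 * exp (-(n * s ^ 2)) := by
  have hn' : (n : ℝ) ≠ 0 := by positivity
  set g : Fin n ⊕ Fin n → α → ℝ :=
    Sum.elim (fun _ t => (1 / n : ℝ) * if t ∈ A then 1 else 0)
      (fun _ t => -((1 / n : ℝ) * if t ∈ B then 1 else 0)) with hg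
  have hgmeas : ∀ i, Measurable (g i) := by
    rintro (j | j)
    · exact (Measurable.ite hA measurable_const measurable_const).const_mul _
    · exact ((Measurable.ite hB measurable_const measurable_const).const_mul _).neg
  set a : Fin n ⊕ Fin n → ℝ := Sum.elim (fun _ => 0) (fun _ => -(1 / n)) with ha
  have hrange : ∀ i t, g i t ∈ Set.Icc (a i) (a i + 1 / n) := by
    rintro (j | j) t <;> simp only [hg, ha, Sum.elim_inl, Sum.elim_inr] <;> split_ifs <;>
      constructor <;> simp
  have hmean : ∀ i, μ[g i ∘ T i] = Sum.elim (fun _ => (1 / n) * ν.real A)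
      (fun _ => -((1 / n) * ν.real B)) i := by
    rintro (j | j)
    · simp only [hg, Function.comp_def, Sum.elim_inl, integral_const_mul]
      rw [integral_ite_mem_eq_measureReal (hTmeas _) (hTlaw _) hA]
    · simp only [hg, Function.comp_def, Sum.elim_inr, integral_neg, integral_const_mul]
      rw [integral_ite_mem_eq_measureReal (hTmeas _) (hTlaw _) hB]
  have hsum : ∀ ω, ∑ i, ((g i ∘ T i) ω - μ[g i ∘ T i])
      = empiricalFreq (fun j => T (.inl j) ω) A
        - empiricalFreq (fun j => T (.inr j) ω) B - (ν.real A - ν.real B) := by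
    intro ω
    simp only [sum_sub_distrib, hmean]
    simp only [Fintype.sum_sum_type, empiricalFreq, hg, Function.comp_apply, Sum.elim_inl,
      Sum.elim_inr, sum_const, card_univ, Fintype.card_fin, nsmul_eq_mul, mul_sum, sum_neg_distrib]
    field_simp
    ring
  have hhoeffding := measureReal_abs_sum_sub_integral_ge_le (hTindep.comp g hgmeas)
    (fun i => ((hgmeas i).comp (hTmeas i)).aemeasurable)
    (fun i => ae_of_all _ fun ω => hrange i (T i ω)) hs
  simp only [hsum] at hhoeffding
  convert hhoeffding using 3
  simp only [Fintype.card_sum, Fintype.card_fin]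
  field_simp
  push_cast
  ring

end

open Finset MeasureTheory ProbabilityTheory Classical in
theorem stmt_17_general {d n : ℕ} {Y : Type*} [Fintype Y] [MeasurableSpace Y]
    [MeasurableSingletonClass Y]
    {Ω : Type*} [MeasurableSpace Ω] (P : Measure Ω)
    (m : ℕ) (hm : m = Fintype.card Y)
    (ν : Measure (Fin d → ℝ))
    (f : (Fin d → ℝ) → Y) (hf : Measurable f)
    (hbar : (Fin d → ℝ) → Y → ℝ)
    (hhbar : ∀ x y, hbar x y = (ν {t | f (x + t) = y}).toReal)
    (D : (Fin d → ℝ) → (Fin d → ℝ) → ℝ)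
    (hfair : ∀ a b, (1 / 2) * ∑ y, |hbar a y - hbar b y| ≤ D a b)
    (T : (Fin n ⊕ Fin n) → Ω → (Fin d → ℝ))
    (hTmeas : ∀ j, Measurable (T j))
    (hTindep : iIndepFun T P)
    (hTlaw : ∀ j, Measure.map (T j) P = ν) :
    ∀ (x1 x2 : Fin d → ℝ) (ε : ℝ), 0 < ε →
      P {ω | (1 / 2) * ∑ y,
            |((1 : ℝ) / n) * ∑ j : Fin n, (if f (x1 + T (Sum.inl j) ω) = y then (1 : ℝ) else 0)
              - ((1 : ℝ) / n) * ∑ j : Fin n, (if f (x2 + T (Sum.inr j) ω) = y then (1 : ℝ) else 0)|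
          ≤ D x1 x2 + ε}
        ≥ ENNReal.ofReal (1 - 2 * m * Real.exp (-4 * n * ε ^ 2 / m ^ 2)) := by
  intro x1 x2 ε hε
  have := hTindep.isProbabilityMeasure
  have hD : 0 ≤ D x1 x2 := le_trans (by positivity) (hfair x1 x2)
  have hexp : 2 * m * Real.exp (-4 * n * ε ^ 2 / m ^ 2)
      = Fintype.card Y * (2 * Real.exp (-(n * (2 * ε / m) ^ 2))) := by
    rw [← hm]; ring_nf
  rw [ge_iff_le, hexp]
  rcases Nat.eq_zero_or_pos n with rfl | hn
  · refine ofReal_one_sub_card_mul_le_measure (B := fun _ => ∅) (fun ω _ => ?_)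
      fun _ => by simp only [measureReal_empty]; positivity
    simp [hD, hε.le, add_nonneg]
  have hpreimage : ∀ x y, MeasurableSet {t | f (x + t) = y} := fun x y =>
    hf.comp (measurable_const_add x) (measurableSet_singleton y)
  refine ofReal_one_sub_card_mul_le_measure (fun ω hω => ?_) fun y =>
    measureReal_abs_empiricalFreq_sub_sub_ge_le hn hTmeas hTindep hTlaw
      (hpreimage x1 y) (hpreimage x2 y) (by positivity : 0 ≤ 2 * ε / m)
  simp only [Set.mem_ofPred_eq, not_le] at hω
  calc _ ≤ (1 / 2) * ∑ y, |hbar x1 y - hbar x2 y| + Fintype.card Y * (2 * ε / m) / 2 :=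
        half_sum_abs_le_of_abs_sub_le fun y => by
          rw [hhbar, hhbar, ← measureReal_def, ← measureReal_def]
          exact (hω y).le
    _ ≤ D x1 x2 + ε := by
        rw [← hm]
        gcongr
        · exact hfair x1 x2
        · rcases eq_or_ne (m : ℝ) 0 with h | h
          · simp [h, hε.le]
          · exact (by field_simp : (m : ℝ) * (2 * ε / m) / 2 = ε).le

open Finset MeasureTheory ProbabilityTheory Classical in
theorem stmt_17 {d n : ℕ} {Y : Type*} [Fintype Y] [MeasurableSpace Y]
    [MeasurableSingletonClass Y]
    {Ω : Type*} [MeasurableSpace Ω] (P : Measure Ω) [IsProbabilityMeasure P]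
    (m : ℕ) (hm : m = Fintype.card Y)
    (ν : Measure (Fin d → ℝ)) [IsProbabilityMeasure ν]
    (f : (Fin d → ℝ) → Y) (hf : Measurable f)
    (hbar : (Fin d → ℝ) → Y → ℝ)
    (hhbar : ∀ x y, hbar x y = (ν {t | f (x + t) = y}).toReal)
    (D : (Fin d → ℝ) → (Fin d → ℝ) → ℝ)
    (hfair : ∀ a b, (1 / 2) * ∑ y, |hbar a y - hbar b y| ≤ D a b)
    (T : (Fin n ⊕ Fin n) → Ω → (Fin d → ℝ))
    (hTmeas : ∀ j, Measurable (T j))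
    (hTindep : iIndepFun T P)
    (hTlaw : ∀ j, Measure.map (T j) P = ν) :
    ∀ (x1 x2 : Fin d → ℝ) (ε : ℝ), 0 < ε →
      P {ω | (1 / 2) * ∑ y,
            |((1 : ℝ) / n) * ∑ j : Fin n, (if f (x1 + T (Sum.inl j) ω) = y then (1 : ℝ) else 0)
              - ((1 : ℝ) / n) * ∑ j : Fin n, (if f (x2 + T (Sum.inr j) ω) = y then (1 : ℝ) else 0)|
          ≤ D x1 x2 + ε}
        ≥ ENNReal.ofReal (1 - 2 * m * Real.exp (-4 * n * ε ^ 2 / m ^ 2)) :=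
  stmt_17_general P m hm ν f hf hbar hhbar D hfair T hTmeas hTindep hTlaw
end
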